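/- If c = (c_1,c_2,c_3,c_4,c_5) ∈ ℤ⁵ is cohomology-free, then −3 ≤ c_5 ≤ 3. -/

import Mathlib

/-- The primitive ray generators `l₁,…,l₇` of the fan, in counterclockwise order,
acting on `ℤ²` by the dot product. -/
def rayForm : Fin 7 → ℤ × ℤ :=
  ![(1, -1), (2, -1), (3, -1), (1, 0), (0, 1), (-1, 2), (0, -1)]

/-- Extend `c ∈ ℤ⁵` to seven coefficients by `c₆ = c₇ = 0`. -/
def cExt (c : Fin 5 → ℤ) : Fin 7 → ℤ :=
  fun i => if h : (i : ℕ) < 5 then c ⟨i, h⟩ else 0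

/-- `N_c(m) = {i : l_i(m) + c_i < 0}`. -/
def Nset (c : Fin 5 → ℤ) (m : ℤ × ℤ) : Finset (Fin 7) :=
  Finset.univ.filter fun i =>
    (rayForm i).1 * m.1 + (rayForm i).2 * m.2 + cExt c i < 0

open Fin.NatCast

/-- A subset of the cyclic index set `Fin 7` is a circular interval if it is empty
or of the form `{a, a+1, …, b}` with indices taken modulo 7. -/
def IsCircularInterval (S : Finset (Fin 7)) : Prop :=
  S = ∅ ∨ ∃ (a : Fin 7) (n : ℕ),
    S = (Finset.range (n + 1)).image fun j : ℕ => a + (j : Fin 7)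

/-- `c ∈ ℤ⁵` is cohomology-free if for every `m ∈ ℤ²` and both `ε ∈ {1, -1}`,
the set `N_{εc}(m)` is a circular interval different from the whole index set. -/
def CohomologyFree (c : Fin 5 → ℤ) : Prop :=
  ∀ m : ℤ × ℤ, ∀ ε : ℤ, ε = 1 ∨ ε = -1 →
    IsCircularInterval (Nset (ε • c) m) ∧ Nset (ε • c) m ≠ Finset.univ

/-! If `c₅ ≥ 4`, evaluate at `m = (1 - 2c₅, -c₅)`: there `l₆ < 0` while `l₅ + c₅ = 0` and
`l₇ = c₅ ≥ 0`, so the circular interval `N_c(m)` is `{6}` (index `5` of `Fin 7`). Hence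
`l_i(m) + c_i ≥ 0` for `i ≤ 4`, which makes `c₁, …, c₄` so large compared with `c₅` that every
`l_i - c_i` is negative at `(3, 1)`: `N_{-c}(3, 1)` is the whole index set. The lower bound is the
upper bound for `-c`, which is cohomology-free as well. -/

lemma mem_Nset {d : Fin 5 → ℤ} {m : ℤ × ℤ} {i : Fin 7} :
    i ∈ Nset d m ↔ (rayForm i).1 * m.1 + (rayForm i).2 * m.2 + cExt d i < 0 := by
  simp [Nset]

lemma Nset_eq_univ_iff {d : Fin 5 → ℤ} {x y : ℤ} :
    Nset d (x, y) = Finset.univ ↔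
      x - y + d 0 < 0 ∧ 2 * x - y + d 1 < 0 ∧ 3 * x - y + d 2 < 0 ∧ x + d 3 < 0 ∧
        y + d 4 < 0 ∧ 2 * y < x ∧ 0 < y := by
  simp [Finset.eq_univ_iff_forall, Fin.forall_fin_succ, mem_Nset, rayForm, cExt]
  omega

lemma IsCircularInterval.eq_singleton {S : Finset (Fin 7)} (hS : IsCircularInterval S)
    {i : Fin 7} (hi : i ∈ S) (hprev : i - 1 ∉ S) (hnext : i + 1 ∉ S) : S = {i} := by
  rcases hS with rfl | ⟨a, n, rfl⟩
  · simp at hi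
  obtain ⟨j, hj, rfl⟩ := Finset.mem_image.1 hi
  obtain rfl : j = 0 := by
    by_contra hj0
    obtain ⟨k, rfl⟩ := Nat.exists_eq_succ_of_ne_zero hj0
    refine hprev (Finset.mem_image.2 ⟨k, by simp at hj ⊢; omega, ?_⟩)
    push_cast
    rw [← add_assoc, add_sub_cancel_right]
  obtain rfl : n = 0 := by
    by_contra hn
    exact hnext (Finset.mem_image.2 ⟨1, by simp; omega, by simp⟩)
  simp

lemma CohomologyFree.neg {c : Fin 5 → ℤ} (h : CohomologyFree c) : CohomologyFree (-c) := by
  intro m ε hε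
  rw [smul_neg, ← neg_smul]
  exact h m (-ε) (by omega)

lemma CohomologyFree.le_three {c : Fin 5 → ℤ} (h : CohomologyFree c) : c 4 ≤ 3 := by
  by_contra! hc
  set m : ℤ × ℤ := (1 - 2 * c 4, -c 4)
  have hN : Nset c m = {5} := by
    have hS := (h m 1 (Or.inl rfl)).1
    rw [one_smul] at hS
    refine hS.eq_singleton ?_ ?_ ?_ <;> simp [mem_Nset, rayForm, cExt, m]
    omega
  have hbounds : c 4 - 1 ≤ c 0 ∧ 3 * c 4 - 2 ≤ c 1 ∧ 5 * c 4 - 3 ≤ c 2 ∧ 2 * c 4 - 1 ≤ c 3 := by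
    have hout : ∀ i ∈ ({0, 1, 2, 3} : Finset (Fin 7)), i ∉ Nset c m := by
      rw [hN]; decide
    simp [mem_Nset, rayForm, cExt, m] at hout
    omega
  apply (h (3, 1) (-1) (Or.inr rfl)).2
  rw [neg_one_smul, Nset_eq_univ_iff]
  simp only [Pi.neg_apply]
  omega

/-- If `c` is cohomology-free then `-3 ≤ c₅ ≤ 3`. -/
theorem c5_bounded (c : Fin 5 → ℤ) (h : CohomologyFree c) :
    -3 ≤ c 4 ∧ c 4 ≤ 3 :=
  ⟨neg_le.mp h.neg.le_three, h.le_three⟩
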